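/- arXiv:1911.09757 — 2 statements merged into one kernel-verified Lean document; each statement's English description precedes it below -/
import Mathlib

section
/- Let D be a set, θ ∈ (0, π), κ ∈ (0, 1], and c > 0. Let ψₖ : D → ℝ, G : D → ℝ, and define ψₖ₊₁ : D → ℝ by ψₖ₊₁(x) = (1/sin θ)·[sin((1−κ)θ)·ψₖ(x) + sin(κθ)·(G(x)/c)] for all x ∈ D (here c plays the role of the L²-norm of G, a positive constant). Let T¹², T²¹ : D → ℝ be functions such that G(x) = −T¹²(x) whenever ψₖ(x) < 0 and G(x) = T²¹(x) whenever ψₖ(x) > 0. Then for every x̂ ∈ D: (i) if ψₖ(x̂) < 0 < ψₖ₊₁(x̂), then T¹²(x̂) < 0; and (ii) if ψₖ(x̂) > 0 > ψₖ₊₁(x̂), then T²¹(x̂) < 0. -/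
/-- Descent direction property of the two-material algorithm (Lemma 2.2 of the
paper): if the material at a point `x̂` is switched by the spherical update step
`ψₖ₊₁ = (1/sin θ)[sin((1-κ)θ) ψₖ + sin(κθ) G/c]`, then the corresponding
topological derivative at iteration `k` was negative. -/
theorem two_material_descent_direction {α : Type*} (D : Set α)
    (θ κ c : ℝ) (hθ : θ ∈ Set.Ioo 0 Real.pi) (hκ : κ ∈ Set.Ioc 0 1) (hc : 0 < c)
    (ψk ψk1 G T12 T21 : α → ℝ)
    (hupd : ∀ x ∈ D, ψk1 x =
      (Real.sin θ)⁻¹ * (Real.sin ((1 - κ) * θ) * ψk x + Real.sin (κ * θ) * (G x / c)))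
    (hG1 : ∀ x ∈ D, ψk x < 0 → G x = -T12 x)
    (hG2 : ∀ x ∈ D, 0 < ψk x → G x = T21 x) :
    ∀ x ∈ D, (ψk x < 0 → 0 < ψk1 x → T12 x < 0) ∧
      (0 < ψk x → ψk1 x < 0 → T21 x < 0) := by
  obtain ⟨hθ0, hθπ⟩ := hθ
  obtain ⟨hκ0, hκ1⟩ := hκ
  have hsθ : 0 < Real.sin θ := Real.sin_pos_of_pos_of_lt_pi hθ0 hθπ
  have hA : 0 ≤ Real.sin ((1 - κ) * θ) :=
    Real.sin_nonneg_of_nonneg_of_le_pi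
      (mul_nonneg (by linarith) hθ0.le)
      (by nlinarith)
  have hB : 0 < Real.sin (κ * θ) :=
    Real.sin_pos_of_pos_of_lt_pi (mul_pos hκ0 hθ0) (by nlinarith)
  intro x hx
  constructor
  · intro h1 h2
    rw [hupd x hx] at h2
    have h3 : 0 < Real.sin ((1 - κ) * θ) * ψk x + Real.sin (κ * θ) * (G x / c) := by
      nlinarith [mul_pos hsθ h2, inv_pos.mpr hsθ]
    have h4 : Real.sin ((1 - κ) * θ) * ψk x ≤ 0 := mul_nonpos_of_nonneg_of_nonpos hA h1.le
    have h5 : 0 < Real.sin (κ * θ) * (G x / c) := by linarith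
    have hgx : 0 < G x := by
      by_contra h
      push_neg at h
      have : G x / c ≤ 0 := div_nonpos_of_nonpos_of_nonneg h hc.le
      nlinarith
    have := hG1 x hx h1
    linarith [this ▸ hgx]
  · intro h1 h2
    rw [hupd x hx] at h2
    have h3 : Real.sin ((1 - κ) * θ) * ψk x + Real.sin (κ * θ) * (G x / c) < 0 := by
      by_contra h
      push_neg at h
      nlinarith [mul_nonneg (inv_pos.mpr hsθ).le h]
    have h4 : 0 ≤ Real.sin ((1 - κ) * θ) * ψk x := mul_nonneg hA h1.le
    have h5 : Real.sin (κ * θ) * (G x / c) < 0 := by linarith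
    have hgx : G x < 0 := by
      by_contra h
      push_neg at h
      have : 0 ≤ G x / c := div_nonneg h hc.le
      nlinarith
    have := hG2 x hx h1
    linarith [this ▸ hgx]
end

section
/- Fix an integer M ≥ 2 and, for each ordered pair (i,j), i ≠ j, vectors n^{i→j} ∈ ℝ^{M−1} with n^{j→i} = −n^{i→j}. For l ∈ {1,…,M} define the sector S_l = {y ∈ ℝ^{M−1} : y · n^{j→l} > 0 for all j ≠ l}, and let N^{(l)} be the invertible (M−1)×(M−1) matrix whose rows are the vectors n^{j→l}, j ≠ l (k-th row n^{σ_l(k)→l} for a fixed bijection σ_l of {1,…,M−1} onto {1,…,M}\{l}). Let D be a set, ψ : D → ℝ^{M−1}, and set Ω_l = {x ∈ D : ψ(x) ∈ S_l}. For each l and each x ∈ Ω_l let T^{(l)}(x) ∈ ℝ^{M−1} be a given vector (of topological derivatives T^{l→σ_l(k)}(x)), and define G(x) = (N^{(l)})⁻¹ T^{(l)}(x) for x ∈ Ω_l. If there exists c > 0 such that ψ(x) = c·G(x) for all x ∈ ⋃_{l=1}^M Ω_l, then for every l, every x ∈ Ω_l and every i ≠ l, the topological derivative T^{l→i}(x)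 is strictly positive; i.e., the design (Ω₁,…,Ω_M) is locally optimal with respect to topological changes. -/
open Matrix

/-- Theorem 3.1 of the paper (multi-material local optimality): let the design
`(Ω₁, …, Ω_M)` be represented by a vector-valued level set function
`ψ : D → ℝ^{M-1}` via `x ∈ Ω_l ⟺ ψ(x) ∈ S_l`, where
`S_l = {y : y ⬝ n^{j→l} > 0 ∀ j ≠ l}`. If `ψ = c • G_ψ` with `c > 0` on
`⋃_l Ω_l`, where `G_ψ = (N^{(l)})⁻¹ T^{(l)}` on `Ω_l`, then all topological
derivatives `T^{l→i}(x)`, `i ≠ l`, are strictly positive, i.e. the design is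
locally optimal with respect to topological changes. -/
theorem multi_material_local_optimality {α : Type*} {M : ℕ} (hM : 2 ≤ M)
    (D : Set α)
    -- the normal vectors n^{i→j} ∈ ℝ^{M-1}, with n^{j→i} = -n^{i→j}
    (n : Fin M → Fin M → (Fin (M - 1) → ℝ))
    (hanti : ∀ i j : Fin M, i ≠ j → n j i = -n i j)
    -- for each l, a bijection σ_l : {1,…,M-1} → {1,…,M} \ {l}
    (σ : Fin M → Fin (M - 1) → Fin M)
    (hσinj : ∀ l, Function.Injective (σ l))
    (hσne : ∀ l k, σ l k ≠ l)
    (hσsurj : ∀ l j, j ≠ l → ∃ k, σ l k = j)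
    -- the matrices N^{(l)} of normal vectors pointing into sector S_l
    (N : Fin M → Matrix (Fin (M - 1)) (Fin (M - 1)) ℝ)
    (hNdef : ∀ l k, N l k = n (σ l k) l)
    (hNinv : ∀ l, IsUnit (N l).det)
    -- the vector-valued level set function and the vectors of top. derivatives
    (ψ : α → (Fin (M - 1) → ℝ))
    (T : Fin M → α → (Fin (M - 1) → ℝ))
    -- the generalized topological derivative G = (N^{(l)})⁻¹ T^{(l)} on Ω_l
    (G : α → (Fin (M - 1) → ℝ))
    (hG : ∀ l : Fin M, ∀ x ∈ D, (∀ j : Fin M, j ≠ l → 0 < ψ x ⬝ᵥ n j l) →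
      G x = (N l)⁻¹.mulVec (T l x))
    -- optimality condition ψ = c G_ψ on ⋃_l Ω_l
    (hopt : ∃ c > (0 : ℝ), ∀ x ∈ D,
      (∃ l : Fin M, ∀ j : Fin M, j ≠ l → 0 < ψ x ⬝ᵥ n j l) → ψ x = c • G x) :
    -- conclusion: for every l, x ∈ Ω_l and i ≠ l, T^{l→i}(x) > 0
    ∀ l : Fin M, ∀ x ∈ D, (∀ j : Fin M, j ≠ l → 0 < ψ x ⬝ᵥ n j l) →
      ∀ i : Fin M, i ≠ l → ∀ k : Fin (M - 1), σ l k = i → 0 < T l x k := by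
  intro l x hx hsec i hi k hk
  obtain ⟨c, hc, hopt⟩ := hopt
  have hψ := hopt x hx ⟨l, hsec⟩
  have hGx := hG l x hx hsec
  have key : (N l).mulVec (ψ x) = c • T l x := by
    rw [hψ, hGx, Matrix.mulVec_smul, Matrix.mulVec_mulVec,
      Matrix.mul_nonsing_inv _ (hNinv l), Matrix.one_mulVec]
  have h1 : (N l).mulVec (ψ x) k = ψ x ⬝ᵥ n i l := by
    rw [Matrix.mulVec, dotProduct_comm]
    simp [hNdef, hk]
  have hp := hsec i hi
  rw [← h1, key] at hp
  have hp' : 0 < c * T l x k := hp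
  nlinarith
end
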